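/- arXiv:2505.04983 — 2 statements merged into one kernel-verified Lean document; each statement's English description precedes it below -/
import Mathlib

section
/- Let U be a real random variable with continuous strictly positive density, and let g₀, g₁ : ℝ → ℝ be strictly increasing continuous functions (representing M_{x'} = g₀(U) and M_{x'''} = g₁(U)). Let F₀(m) = P(g₀(U) ≤ m) and F₁ its analogue for g₁, with F₁⁻¹ the inverse of F₁. Then for every m in the range of g₀, conditionally on g₀(U) = m the variable g₁(U) is almost surely equal to the constant F₁⁻¹(F₀(m)); equivalently, g₁(U) = F₁⁻¹(F₀(g₀(U))) almost surely. -/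
open MeasureTheory

theorem measure_setOf_strictMono_comp_le {Ω α β : Type*} [MeasurableSpace Ω] [LinearOrder α]
    [Preorder β] (μ : Measure Ω) (U : Ω → α) {g : α → β} (hg : StrictMono g) (a : α) :
    μ {ω | g (U ω) ≤ g a} = μ {ω | U ω ≤ a} := by
  simp only [hg.le_iff_le]

theorem stmt3_general {Ω : Type*} [MeasurableSpace Ω] (μ : Measure Ω)
    (U : Ω → ℝ)
    (g₀ g₁ : ℝ → ℝ) (hg₀ : StrictMono g₀)
    (hg₁ : StrictMono g₁)
    (F₀ F₁ Finv : ℝ → ℝ)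
    (hF₀ : ∀ m, F₀ m = (μ {ω | g₀ (U ω) ≤ m}).toReal)
    (hF₁ : ∀ m, F₁ m = (μ {ω | g₁ (U ω) ≤ m}).toReal)
    (hFinv : ∀ m, Finv (F₁ m) = m) :
    ∀ᵐ ω ∂μ, g₁ (U ω) = Finv (F₀ (g₀ (U ω))) := by
  refine Filter.Eventually.of_forall fun ω => ?_
  have hF₀_eq_F₁ : F₀ (g₀ (U ω)) = F₁ (g₁ (U ω)) := by
    rw [hF₀, hF₁, measure_setOf_strictMono_comp_le μ U hg₀,
      measure_setOf_strictMono_comp_le μ U hg₁]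
  rw [hF₀_eq_F₁, hFinv]

/-- Lemma 4.1: under strict monotonicity, conditionally on `g₀(U)` the variable `g₁(U)`
is the deterministic quantile transport `F₁⁻¹(F₀(g₀(U)))`. -/
theorem stmt3 {Ω : Type*} [MeasurableSpace Ω] (μ : Measure Ω) [IsProbabilityMeasure μ]
    (U : Ω → ℝ) (hU : Measurable U)
    (hcdf_mono : StrictMono fun t : ℝ => (μ {ω | U ω ≤ t}).toReal)
    (hcdf_cont : Continuous fun t : ℝ => (μ {ω | U ω ≤ t}).toReal)
    (g₀ g₁ : ℝ → ℝ) (hg₀ : StrictMono g₀) (hg₀c : Continuous g₀)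
    (hg₁ : StrictMono g₁) (hg₁c : Continuous g₁)
    (F₀ F₁ Finv : ℝ → ℝ)
    (hF₀ : ∀ m, F₀ m = (μ {ω | g₀ (U ω) ≤ m}).toReal)
    (hF₁ : ∀ m, F₁ m = (μ {ω | g₁ (U ω) ≤ m}).toReal)
    (hFinv : ∀ m, Finv (F₁ m) = m) :
    ∀ᵐ ω ∂μ, g₁ (U ω) = Finv (F₀ (g₀ (U ω))) :=
  stmt3_general μ U g₀ g₁ hg₀ hg₁ F₀ F₁ Finv hF₀ hF₁ hFinv
end

section
/- Let T be a real random variable with continuous CDF F_T, and a, b, c, d, e, f ∈ ℝ with F_T(e) < F_T(f). Then P(T ≥ c, T < a, T < b, T ≥ d | e ≤ T < f) = max(min(F_T(a), F_T(b), F_T(f)) − max(F_T(c), F_T(d), F_T(e)), 0) / (F_T(f) − F_T(e)). (Identification formula for PNS^{X→N→Y}, case 1A of Theorem 4.2.) -/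
/-!
With a continuous CDF `F`, the law of `T` has no atoms, so `P(s ≤ T < t) = max (F t - F s) 0`.
The event and the conditioning event together say that `T` lies in the single interval
`[max c d e, min a b f)`, and a monotone `F` commutes with `max` and `min`.
-/

open MeasureTheory ProbabilityTheory Set

theorem StieltjesFunction.measure_Ico_of_continuous (F : StieltjesFunction ℝ) (hF : Continuous F)
    (s t : ℝ) : F.measure (Ico s t) = ENNReal.ofReal (F t - F s) := by
  rw [F.measure_Ico, hF.continuousWithinAt.leftLim_eq, hF.continuousWithinAt.leftLim_eq]

section Preimage

variable {Ω : Type*} [MeasurableSpace Ω] (μ : Measure Ω) [IsProbabilityMeasure μ]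
  {T : Ω → ℝ}

lemma cdf_map_apply (hT : Measurable T) (t : ℝ) :
    cdf (μ.map T) t = (μ {ω | T ω ≤ t}).toReal := by
  have := Measure.isProbabilityMeasure_map (μ := μ) hT.aemeasurable
  rw [cdf_eq_real, measureReal_def, Measure.map_apply hT measurableSet_Iic]
  rfl

lemma toReal_measure_preimage_Ico (hT : Measurable T) (hF : Continuous (cdf (μ.map T)))
    (s t : ℝ) :
    (μ (T ⁻¹' Ico s t)).toReal = max (cdf (μ.map T) t - cdf (μ.map T) s) 0 := by
  have := Measure.isProbabilityMeasure_map (μ := μ) hT.aemeasurable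
  have hIco := (cdf (μ.map T)).measure_Ico_of_continuous hF s t
  rw [measure_cdf] at hIco
  rw [← Measure.map_apply hT measurableSet_Ico, hIco, ENNReal.toReal_ofReal']

end Preimage

/-- Identification formula for `PNS^{X→N→Y}` (case 1A of Theorem 4.2):
`P(T≥c, T<a, T<b, T≥d | e ≤ T < f)
  = max(min(F a, F b, F f) − max(F c, F d, F e), 0) / (F f − F e)`. -/
theorem stmt6 {Ω : Type*} [MeasurableSpace Ω] (μ : Measure Ω) [IsProbabilityMeasure μ]
    (T : Ω → ℝ) (hT : Measurable T) (F : ℝ → ℝ)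
    (hF : ∀ t, F t = (μ {ω | T ω ≤ t}).toReal) (hFc : Continuous F)
    (a b c d e f : ℝ) (hef : F e < F f) :
    ((μ[|{ω | e ≤ T ω ∧ T ω < f}]) {ω | c ≤ T ω ∧ T ω < a ∧ T ω < b ∧ d ≤ T ω}).toReal
      = max (min (min (F a) (F b)) (F f) - max (max (F c) (F d)) (F e)) 0
          / (F f - F e) := by
  obtain rfl : F = cdf (μ.map T) := funext fun t ↦ (hF t).trans (cdf_map_apply μ hT t).symm
  have hB : (μ (T ⁻¹' Ico e f)).toReal = cdf (μ.map T) f - cdf (μ.map T) e := by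
    rw [toReal_measure_preimage_Ico μ hT hFc, max_eq_left (sub_nonneg.2 hef.le)]
  have hinter : T ⁻¹' Ico e f ∩ {ω | c ≤ T ω ∧ T ω < a ∧ T ω < b ∧ d ≤ T ω}
      = T ⁻¹' Ico (max (max c d) e) (min (min a b) f) := by
    ext ω
    simp only [mem_inter_iff, mem_preimage, mem_Ico, mem_ofPred_eq, max_le_iff, lt_min_iff]
    tauto
  have hmono := monotone_cdf (μ.map T)
  change (μ[|T ⁻¹' Ico e f] _).toReal = _
  rw [cond_apply (hT measurableSet_Ico), hinter, ENNReal.toReal_mul,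
    ENNReal.toReal_inv, hB, toReal_measure_preimage_Ico μ hT hFc, hmono.map_min, hmono.map_min,
    hmono.map_max, hmono.map_max, inv_mul_eq_div]
end
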